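/- arXiv:1706.01091 — 6 statements merged into one kernel-verified Lean document; each statement's English description precedes it below -/
import Mathlib

section
/- Let V be a finite nonempty set, let P ∈ ℝ^{V×V} be row-stochastic, and let α ∈ (0,1). Then the matrix I − (1−α)P is invertible, its inverse equals the convergent series Σ_{i=0}^∞ (1−α)^i P^i, and for every probability row vector σ on V the row vector π_σ := α σ (I − (1−α)P)^{-1} = α σ Σ_{i=0}^∞ (1−α)^i P^i is the unique row vector x with Σ_{v∈V} x(v) = 1 satisfying the global balance equation x = x((1−α)P + α 1 σ), where 1 is the all-ones column vector. -/
open scoped BigOperators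
open Matrix

/-- The Neumann series `∑ (1-α)^i P^i` defining personalized PageRank. -/
noncomputable def pprSeries {V : Type*} [Fintype V] [DecidableEq V]
    (P : Matrix V V ℝ) (α : ℝ) : Matrix V V ℝ :=
  ∑' i : ℕ, (1 - α) ^ i • P ^ i

/-- Personalized PageRank row vector with jump distribution `σ`:
`π_σ = α σ ∑ (1-α)^i P^i`. -/
noncomputable def ppr {V : Type*} [Fintype V] [DecidableEq V]
    (P : Matrix V V ℝ) (α : ℝ) (σ : V → ℝ) : V → ℝ :=
  Matrix.vecMul (α • σ) (pprSeries P α)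

/-!
Under the `ℓ∞` operator norm a row-stochastic matrix has norm at most `1`, so for `|1 - α| < 1`
the Neumann series of `(1 - α) P` converges to `(I - (1 - α) P)⁻¹`. Right multiplication by
`I - (1 - α) P` scales the total mass of a row vector by `α`, so `π_σ` has total mass `1`; and for
a row vector `x` of total mass `1` the global balance equation reads `x (I - (1 - α) P) = α σ`,
whose unique solution is `π_σ`.
-/

namespace Matrix

variable {n R : Type*} [Fintype n]

theorem vecMul_eq_iff_eq_vecMul_inv [DecidableEq n] [CommRing R] {A : Matrix n n R}
    (hA : IsUnit A) {x y : n → R} : x ᵥ* A = y ↔ x = y ᵥ* A⁻¹ := by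
  have hdet := (isUnit_iff_isUnit_det A).1 hA
  constructor
  · rintro rfl
    rw [vecMul_vecMul, mul_nonsing_inv A hdet, vecMul_one]
  · rintro rfl
    rw [vecMul_vecMul, nonsing_inv_mul A hdet, vecMul_one]

theorem vecMul_replicateRow_eq_sum_smul [CommSemiring R] (x : n → R) (σ : n → R) :
    x ᵥ* replicateRow n σ = (∑ i, x i) • σ := by
  ext v
  simp [vecMul, dotProduct, Finset.sum_mul]

end Matrix

section RowStochastic

variable {V : Type*} [Fintype V] [DecidableEq V] {P : Matrix V V ℝ}

theorem sum_vecMul_one_sub_smul_of_mem_rowStochastic (hP : P ∈ rowStochastic ℝ V) (c : ℝ)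
    (x : V → ℝ) : ∑ v, (x ᵥ* (1 - c • P)) v = (1 - c) * ∑ v, x v := by
  have hmass : (x ᵥ* P) ⬝ᵥ 1 = x ⬝ᵥ 1 := by
    rw [← dotProduct_mulVec, one_vecMul_of_mem_rowStochastic hP]
  rw [← dotProduct_one, ← dotProduct_one, vecMul_sub, vecMul_one, vecMul_smul, sub_dotProduct,
    smul_dotProduct, hmass, smul_eq_mul]
  ring

section LinftyOpNorm

attribute [local instance] Matrix.linftyOpNormedRing Matrix.linftyOpNormedSpace

theorem linfty_opNorm_le_one_of_mem_rowStochastic (hP : P ∈ rowStochastic ℝ V) : ‖P‖ ≤ 1 := by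
  rw [linfty_opNorm_def, NNReal.coe_le_one]
  refine Finset.sup_le fun u _ => le_of_eq ?_
  rw [← NNReal.coe_inj]
  push_cast
  simp_rw [Real.norm_of_nonneg (nonneg_of_mem_rowStochastic hP)]
  exact sum_row_of_mem_rowStochastic hP u

theorem norm_smul_lt_one_of_mem_rowStochastic (hP : P ∈ rowStochastic ℝ V) {c : ℝ}
    (hc : |c| < 1) : ‖c • P‖ < 1 :=
  calc ‖c • P‖ = |c| * ‖P‖ := by rw [norm_smul, Real.norm_eq_abs]
    _ ≤ |c| * 1 := by gcongr; exact linfty_opNorm_le_one_of_mem_rowStochastic hP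
    _ < 1 := by rwa [mul_one]

theorem summable_pow_smul_pow_of_mem_rowStochastic (hP : P ∈ rowStochastic ℝ V) {c : ℝ}
    (hc : |c| < 1) : Summable fun i : ℕ => c ^ i • P ^ i := by
  simp_rw [← smul_pow]
  exact summable_geometric_of_norm_lt_one (norm_smul_lt_one_of_mem_rowStochastic hP hc)

theorem isUnit_one_sub_smul_of_mem_rowStochastic (hP : P ∈ rowStochastic ℝ V) {c : ℝ}
    (hc : |c| < 1) : IsUnit (1 - c • P) :=
  (Units.oneSub _ (norm_smul_lt_one_of_mem_rowStochastic hP hc)).isUnit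

theorem inv_one_sub_smul_eq_pprSeries (hP : P ∈ rowStochastic ℝ V) {α : ℝ}
    (hα : |1 - α| < 1) : (1 - (1 - α) • P)⁻¹ = pprSeries P α := by
  rw [nonsing_inv_eq_ringInverse,
    ← geom_series_eq_inverse _ (norm_smul_lt_one_of_mem_rowStochastic hP hα), pprSeries]
  simp_rw [smul_pow]
  -- the two sums differ only in the topology instance: the `ℓ∞` one versus the product one
  rfl

end LinftyOpNorm

theorem vecMul_one_sub_smul_eq_iff_eq_ppr (hP : P ∈ rowStochastic ℝ V) {α : ℝ}
    (hα : |1 - α| < 1) (σ x : V → ℝ) : x ᵥ* (1 - (1 - α) • P) = α • σ ↔ x = ppr P α σ := by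
  rw [vecMul_eq_iff_eq_vecMul_inv (isUnit_one_sub_smul_of_mem_rowStochastic hP hα),
    inv_one_sub_smul_eq_pprSeries hP hα, ppr]

theorem sum_ppr (hP : P ∈ rowStochastic ℝ V) {α : ℝ} (hα0 : α ≠ 0) (hα : |1 - α| < 1)
    (σ : V → ℝ) : ∑ v, ppr P α σ v = ∑ v, σ v := by
  have hbalance := (vecMul_one_sub_smul_eq_iff_eq_ppr hP hα σ _).2 rfl
  have hmass := sum_vecMul_one_sub_smul_of_mem_rowStochastic hP (1 - α) (ppr P α σ)
  rw [hbalance, sub_sub_cancel] at hmass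
  simp only [Pi.smul_apply, smul_eq_mul, ← Finset.mul_sum] at hmass
  exact (mul_left_cancel₀ hα0 hmass).symm

end RowStochastic

theorem eq_vecMul_add_replicateRow_iff {V : Type*} [Fintype V] [DecidableEq V]
    (P : Matrix V V ℝ) (c α : ℝ) (σ : V → ℝ) {x : V → ℝ} (hx : ∑ v, x v = 1) :
    x = x ᵥ* (c • P + α • replicateRow V σ) ↔ x ᵥ* (1 - c • P) = α • σ := by
  rw [vecMul_add, vecMul_smul, vecMul_smul, vecMul_replicateRow_eq_sum_smul, hx, one_smul,
    vecMul_sub, vecMul_one, vecMul_smul, sub_eq_iff_eq_add']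

theorem stmt0_general {V : Type*} [Fintype V] [DecidableEq V]
    (P : Matrix V V ℝ) (hP0 : ∀ u v, 0 ≤ P u v) (hP1 : ∀ u, ∑ v, P u v = 1)
    (α : ℝ) (hα0 : 0 < α) (hα1 : α < 1) :
    -- the series converges
    Summable (fun i : ℕ => (1 - α) ^ i • P ^ i) ∧
    -- `I - (1-α) P` is invertible and its inverse equals the series
    IsUnit (1 - (1 - α) • P) ∧
    (1 - (1 - α) • P)⁻¹ = pprSeries P α ∧
    -- for every probability row vector σ, π_σ = α σ (I - (1-α)P)⁻¹ = α σ ∑ (1-α)^i P^i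
    ∀ σ : V → ℝ, (∀ v, 0 ≤ σ v) → ∑ v, σ v = 1 →
      Matrix.vecMul (α • σ) ((1 - (1 - α) • P)⁻¹) = ppr P α σ ∧
      -- π_σ is the unique row vector summing to 1 satisfying global balance
      ∀ x : V → ℝ,
        ((∑ v, x v = 1) ∧
          x = Matrix.vecMul x ((1 - α) • P + α • Matrix.of (fun _ v => σ v)))
        ↔ x = ppr P α σ := by
  have hP : P ∈ rowStochastic ℝ V := mem_rowStochastic_iff_sum.2 ⟨hP0, hP1⟩
  have hα : |1 - α| < 1 := abs_sub_lt_iff.2 ⟨by linarith, by linarith⟩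
  have hinv := inv_one_sub_smul_eq_pprSeries hP hα
  refine ⟨summable_pow_smul_pow_of_mem_rowStochastic hP hα,
    isUnit_one_sub_smul_of_mem_rowStochastic hP hα, hinv, fun σ _ hσ => ⟨by rw [hinv, ppr], ?_⟩⟩
  intro x
  constructor
  · rintro ⟨hx, hbalance⟩
    exact (vecMul_one_sub_smul_eq_iff_eq_ppr hP hα σ x).1
      ((eq_vecMul_add_replicateRow_iff P _ _ σ hx).1 hbalance)
  · rintro rfl
    have hmass : ∑ v, ppr P α σ v = 1 := (sum_ppr hP hα0.ne' hα σ).trans hσ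
    exact ⟨hmass, (eq_vecMul_add_replicateRow_iff P _ _ σ hmass).2
      ((vecMul_one_sub_smul_eq_iff_eq_ppr hP hα σ _).2 rfl)⟩

theorem stmt0 {V : Type*} [Fintype V] [DecidableEq V] [Nonempty V]
    (P : Matrix V V ℝ) (hP0 : ∀ u v, 0 ≤ P u v) (hP1 : ∀ u, ∑ v, P u v = 1)
    (α : ℝ) (hα0 : 0 < α) (hα1 : α < 1) :
    -- the series converges
    Summable (fun i : ℕ => (1 - α) ^ i • P ^ i) ∧
    -- `I - (1-α) P` is invertible and its inverse equals the series
    IsUnit (1 - (1 - α) • P) ∧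
    (1 - (1 - α) • P)⁻¹ = pprSeries P α ∧
    -- for every probability row vector σ, π_σ = α σ (I - (1-α)P)⁻¹ = α σ ∑ (1-α)^i P^i
    ∀ σ : V → ℝ, (∀ v, 0 ≤ σ v) → ∑ v, σ v = 1 →
      Matrix.vecMul (α • σ) ((1 - (1 - α) • P)⁻¹) = ppr P α σ ∧
      -- π_σ is the unique row vector summing to 1 satisfying global balance
      ∀ x : V → ℝ,
        ((∑ v, x v = 1) ∧
          x = Matrix.vecMul x ((1 - α) • P + α • Matrix.of (fun _ v => σ v)))
        ↔ x = ppr P α σ :=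
  stmt0_general P hP0 hP1 α hα0 hα1
end

section
/- Fix s, t ∈ V. Suppose p^s, r^s ∈ ℝ_+^V satisfy the forward invariant for s and p^t, r^t ∈ ℝ_+^V satisfy the backward invariant for t. Then π_s(t) = p^t(s) + ⟨p^s, r^t⟩ + Σ_{w,w'∈V} r^s(w) π_w(w') r^t(w'), where ⟨p^s, r^t⟩ = Σ_{u∈V} p^s(u) r^t(u). -/
open scoped BigOperators
open Matrix

/-- `π_s := π_{e_s}` where `e_s` is the indicator row vector of `s`. -/
noncomputable def pprPoint {V : Type*} [Fintype V] [DecidableEq V]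
    (P : Matrix V V ℝ) (α : ℝ) (s : V) : V → ℝ :=
  ppr P α (Pi.single s 1)

theorem stmt3 {V : Type*} [Fintype V] [DecidableEq V] [Nonempty V]
    (P : Matrix V V ℝ) (hP0 : ∀ u v, 0 ≤ P u v) (hP1 : ∀ u, ∑ v, P u v = 1)
    (α : ℝ) (hα0 : 0 < α) (hα1 : α < 1)
    (s t : V) (ps rs pt rt : V → ℝ)
    (hps0 : ∀ v, 0 ≤ ps v) (hrs0 : ∀ v, 0 ≤ rs v)
    (hpt0 : ∀ v, 0 ≤ pt v) (hrt0 : ∀ v, 0 ≤ rt v)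
    -- forward invariant for s
    (hfwd : ∀ u, pprPoint P α s u = ps u + ∑ w, rs w * pprPoint P α w u)
    -- backward invariant for t
    (hbwd : ∀ v, pprPoint P α v t = pt v + ∑ w, pprPoint P α v w * rt w) :
    pprPoint P α s t =
      pt s + (∑ u, ps u * rt u) + ∑ w, ∑ w', rs w * pprPoint P α w w' * rt w' := by
  rw [hbwd s]
  have h : ∑ w, pprPoint P α s w * rt w =
      (∑ u, ps u * rt u) + ∑ w', ∑ w, rs w * pprPoint P α w w' * rt w' := by
    rw [← Finset.sum_add_distrib]
    refine Finset.sum_congr rfl fun w' _ => ?_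
    rw [hfwd w', add_mul, Finset.sum_mul]
  rw [h, Finset.sum_comm, add_assoc]
end

section
/- (Complexity of the unified MCMC stage, Theorem 5.1) Let S and V be finite nonempty sets, and for each s ∈ S let σ_s be a probability distribution on V. Let p_fail, ε ∈ (0,1) and let w be a positive integer with w > 3 log(2 Σ_{s∈S, v∈V} 1{σ_s(v) > 0} / p_fail) / (ε² min{σ_s(v) : s ∈ S, v ∈ V, σ_s(v) > 0}). For each s ∈ S let ν_s^{(1)}, …, ν_s^{(w)} be i.i.d. V-valued random variables with law σ_s (the families for different s need not be independent), let X_s^{(w)}(v) := Σ_{i=1}^w 1{ν_s^{(i)} = v}, and let X^{(w)}(v) := max_{s∈S} X_s^{(w)}(v). Then with probability at least 1 − p_fail, |Σ_{v∈V} X^{(w)}(v) − w Σ_{v∈V} max_{s∈S} σ_s(v)| ≤ ε w Σ_{v∈V} max_{s∈S} σ_s(v). -/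
/-!
Each count `X_s(v)` is a sum of `w` independent Bernoulli(`σ_s(v)`) indicators, so the
multiplicative Chernoff bound gives `|X_s(v) - w σ_s(v)| ≤ ε w σ_s(v)` outside an event of
probability at most `2 exp(-ε² w σ_s(v) / 3)`, and the lower bound on `w` makes this at most
`p_fail / N` for each of the `N` pairs with `σ_s(v) > 0`; when `σ_s(v) = 0` the count vanishes
almost surely. By the union bound all pairs are accurate with probability at least `1 - p_fail`,
and relative errors survive maxima and sums: if `|a_s - b_s| ≤ ε b_s` for all `s`, then
`|max a - max b| ≤ ε max b`.
-/

open MeasureTheory ProbabilityTheory Real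

lemma sq_div_three_le_one_add_mul_log_one_add_sub {ε : ℝ} (h0 : 0 ≤ ε) (h1 : ε ≤ 1) :
    ε ^ 2 / 3 ≤ (1 + ε) * log (1 + ε) - ε := by
  have hlog : 2 * ε / (ε + 2) * (1 + ε) ≤ log (1 + ε) * (1 + ε) :=
    mul_le_mul_of_nonneg_right (le_log_one_add_of_nonneg h0) (by linarith)
  have hkey : ε ^ 2 / 3 + ε ≤ 2 * ε / (ε + 2) * (1 + ε) := by
    rw [div_mul_eq_mul_div, le_div_iff₀ (by linarith)]
    nlinarith [mul_le_mul_of_nonneg_left h1 (sq_nonneg ε)]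
  linarith

lemma sq_div_two_le_one_sub_mul_log_one_sub_add {ε : ℝ} (h0 : 0 ≤ ε) (h1 : ε < 1) :
    ε ^ 2 / 2 ≤ (1 - ε) * log (1 - ε) + ε := by
  have hpos : 0 < 1 - ε := by linarith
  set y := (ε - ε ^ 2 / 2) / (1 - ε) with hy
  have hy0 : 0 ≤ y := div_nonneg (by nlinarith) hpos.le
  -- since `(1 - ε)² (1 + y + y²/2) = 1 - ε + ε⁴/8`
  have hquad : 1 ≤ (1 - ε) * (1 + y + y ^ 2 / 2) := by
    rw [hy, div_pow]
    field_simp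
    nlinarith [pow_nonneg h0 4]
  have hexp : 1 ≤ (1 - ε) * exp y :=
    hquad.trans (mul_le_mul_of_nonneg_left (quadratic_le_exp_of_nonneg hy0) hpos.le)
  have hlog : -y ≤ log (1 - ε) := by
    rw [le_log_iff_exp_le hpos, exp_neg, inv_le_iff_one_le_mul₀ (exp_pos y)]
    exact hexp
  have hy_mul : (1 - ε) * (-y) = -(ε - ε ^ 2 / 2) := by rw [hy]; field_simp
  nlinarith [mul_le_mul_of_nonneg_left hlog hpos.le]

lemma exp_mul_le_one_add_mul {t y : ℝ} (hy : y ∈ Set.Icc (0 : ℝ) 1) :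
    exp (t * y) ≤ 1 + (exp t - 1) * y := by
  have h := convexOn_exp.2 (Set.mem_univ 0) (Set.mem_univ t) (sub_nonneg.2 hy.2) hy.1
    (sub_add_cancel 1 y)
  simp only [smul_eq_mul, mul_zero, zero_add, exp_zero, mul_one] at h
  rw [mul_comm]; linarith

section Chernoff

variable {Ω : Type*} [MeasurableSpace Ω] {μ : Measure Ω} [IsProbabilityMeasure μ]

lemma mgf_le_exp_of_mem_Icc {Y : Ω → ℝ} (hY : AEMeasurable Y μ)
    (hY01 : ∀ ω, Y ω ∈ Set.Icc (0 : ℝ) 1) (t : ℝ) :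
    mgf Y μ t ≤ exp ((exp t - 1) * μ[Y]) := by
  have hYint : Integrable Y μ := .of_mem_Icc 0 1 hY (ae_of_all _ hY01)
  calc mgf Y μ t ≤ ∫ ω, 1 + (exp t - 1) * Y ω ∂μ :=
        integral_mono (integrable_exp_mul_of_mem_Icc hY (ae_of_all _ hY01))
          ((integrable_const 1).add (hYint.const_mul _))
          fun ω => exp_mul_le_one_add_mul (hY01 ω)
    _ = 1 + (exp t - 1) * μ[Y] := by
        rw [integral_add (integrable_const 1) (hYint.const_mul _), integral_const_mul]
        simp
    _ ≤ exp ((exp t - 1) * μ[Y]) := by linarith [add_one_le_exp ((exp t - 1) * μ[Y])]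

lemma ProbabilityTheory.iIndepFun.mgf_sum_le_exp {ι : Type*} [Fintype ι] {Y : ι → Ω → ℝ}
    (hindep : iIndepFun Y μ) (hY : ∀ i, Measurable (Y i))
    (hY01 : ∀ i ω, Y i ω ∈ Set.Icc (0 : ℝ) 1) (t : ℝ) :
    mgf (∑ i, Y i) μ t ≤ exp ((exp t - 1) * ∑ i, μ[Y i]) := by
  rw [hindep.mgf_sum hY, Finset.mul_sum, exp_sum]
  exact Finset.prod_le_prod (fun i _ => mgf_nonneg)
    fun i _ => mgf_le_exp_of_mem_Icc (hY i).aemeasurable (hY01 i) t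

variable {X : Ω → ℝ} {m ε : ℝ}

lemma measureReal_ge_le_of_mgf_le (hm : 0 ≤ m) (hε0 : 0 ≤ ε) (hε1 : ε ≤ 1)
    (hint : ∀ t, Integrable (fun ω => exp (t * X ω)) μ)
    (hmgf : ∀ t, mgf X μ t ≤ exp ((exp t - 1) * m)) :
    μ.real {ω | (1 + ε) * m ≤ X ω} ≤ exp (-(ε ^ 2 * m / 3)) := by
  have hε : 0 < 1 + ε := by linarith
  set t := log (1 + ε)
  calc μ.real {ω | (1 + ε) * m ≤ X ω} ≤ exp (-t * ((1 + ε) * m)) * mgf X μ t :=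
        measure_ge_le_exp_mul_mgf _ (log_nonneg (by linarith)) (hint t)
    _ ≤ exp (-t * ((1 + ε) * m)) * exp ((exp t - 1) * m) := by gcongr; exact hmgf t
    _ = exp (-(((1 + ε) * t - ε) * m)) := by rw [← exp_add, exp_log hε]; ring_nf
    _ ≤ exp (-(ε ^ 2 * m / 3)) := by
        gcongr
        nlinarith [sq_div_three_le_one_add_mul_log_one_add_sub hε0 hε1]

lemma measureReal_le_le_of_mgf_le (hm : 0 ≤ m) (hε0 : 0 ≤ ε) (hε1 : ε < 1)
    (hint : ∀ t, Integrable (fun ω => exp (t * X ω)) μ)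
    (hmgf : ∀ t, mgf X μ t ≤ exp ((exp t - 1) * m)) :
    μ.real {ω | X ω ≤ (1 - ε) * m} ≤ exp (-(ε ^ 2 * m / 2)) := by
  have hε : 0 < 1 - ε := by linarith
  set t := log (1 - ε)
  calc μ.real {ω | X ω ≤ (1 - ε) * m} ≤ exp (-t * ((1 - ε) * m)) * mgf X μ t :=
        measure_le_le_exp_mul_mgf _ (log_nonpos hε.le (by linarith)) (hint t)
    _ ≤ exp (-t * ((1 - ε) * m)) * exp ((exp t - 1) * m) := by gcongr; exact hmgf t
    _ = exp (-(((1 - ε) * t + ε) * m)) := by rw [← exp_add, exp_log hε]; ring_nf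
    _ ≤ exp (-(ε ^ 2 * m / 2)) := by
        gcongr
        nlinarith [sq_div_two_le_one_sub_mul_log_one_sub_add hε0 hε1]

lemma measureReal_abs_sub_gt_le_of_mgf_le (hm : 0 ≤ m) (hε0 : 0 ≤ ε) (hε1 : ε < 1)
    (hint : ∀ t, Integrable (fun ω => exp (t * X ω)) μ)
    (hmgf : ∀ t, mgf X μ t ≤ exp ((exp t - 1) * m)) :
    μ.real {ω | ε * m < |X ω - m|} ≤ 2 * exp (-(ε ^ 2 * m / 3)) := by
  have hsub : {ω | ε * m < |X ω - m|} ⊆ {ω | (1 + ε) * m ≤ X ω} ∪ {ω | X ω ≤ (1 - ε) * m} := by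
    intro ω (hω : ε * m < |X ω - m|)
    rcases lt_abs.1 hω with h | h
    · exact Or.inl (show (1 + ε) * m ≤ X ω by linarith)
    · exact Or.inr (show X ω ≤ (1 - ε) * m by linarith)
  have hexp : exp (-(ε ^ 2 * m / 2)) ≤ exp (-(ε ^ 2 * m / 3)) :=
    exp_le_exp.2 (by linarith [mul_nonneg (sq_nonneg ε) hm])
  calc μ.real {ω | ε * m < |X ω - m|}
      ≤ μ.real {ω | (1 + ε) * m ≤ X ω} + μ.real {ω | X ω ≤ (1 - ε) * m} :=
        (measureReal_mono hsub).trans (measureReal_union_le _ _)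
    _ ≤ 2 * exp (-(ε ^ 2 * m / 3)) := by
        linarith [measureReal_ge_le_of_mgf_le hm hε0 hε1.le hint hmgf,
          measureReal_le_le_of_mgf_le hm hε0 hε1 hint hmgf]

end Chernoff

section Sampling

variable {Ω ι V : Type*} [MeasurableSpace Ω] {μ : Measure Ω} [Fintype ι] [DecidableEq V]

def empiricalCount (ν : ι → Ω → V) (v : V) (ω : Ω) : ℝ :=
  ∑ i, if ν i ω = v then 1 else 0

lemma measure_empiricalCount_ne_zero {ν : ι → Ω → V} {v : V}
    (hlaw : ∀ i, μ {ω | ν i ω = v} = 0) : μ {ω | empiricalCount ν v ω ≠ 0} = 0 := by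
  refine measure_mono_null (fun ω hω => ?_) (measure_iUnion_null hlaw)
  by_contra hnot
  simp only [Set.mem_iUnion, not_exists] at hnot
  exact hω (Finset.sum_eq_zero fun i _ => if_neg (hnot i))

lemma measure_abs_empiricalCount_sub_gt_le [IsProbabilityMeasure μ] [MeasurableSpace V]
    [MeasurableSingletonClass V] {ν : ι → Ω → V} (hmeas : ∀ i, Measurable (ν i))
    (hindep : iIndepFun ν μ) {v : V} {p ε : ℝ} (hp : 0 ≤ p)
    (hlaw : ∀ i, μ {ω | ν i ω = v} = ENNReal.ofReal p) (hε0 : 0 ≤ ε) (hε1 : ε < 1) :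
    μ {ω | ε * (Fintype.card ι * p) < |empiricalCount ν v ω - Fintype.card ι * p|}
      ≤ ENNReal.ofReal (2 * exp (-(ε ^ 2 * (Fintype.card ι * p) / 3))) := by
  set Y : ι → Ω → ℝ := fun i ω => if ν i ω = v then 1 else 0
  have hY : ∀ i, Measurable (Y i) := fun i =>
    Measurable.ite (hmeas i (measurableSet_singleton v)) measurable_const measurable_const
  have hY01 : ∀ i ω, Y i ω ∈ Set.Icc (0 : ℝ) 1 := fun i ω => by
    by_cases h : ν i ω = v <;> simp [Y, h]
  have hindepY : iIndepFun Y μ :=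
    hindep.comp (fun _ u => if u = v then (1 : ℝ) else 0)
      fun _ => Measurable.ite (measurableSet_singleton v) measurable_const measurable_const
  have hmean : ∀ i, μ[Y i] = p := fun i => by
    have hind : Y i = {ω | ν i ω = v}.indicator 1 := by
      ext ω; simp [Y, Set.indicator_apply]
    rw [hind, integral_indicator_one (s := {ω | ν i ω = v}) (hmeas i (measurableSet_singleton v)), measureReal_def,
      hlaw i, ENNReal.toReal_ofReal hp]
  have hX : ∀ ω, (∑ i, Y i) ω = empiricalCount ν v ω := fun ω => Finset.sum_apply _ _ _
  have hX0n : ∀ ω, (∑ i, Y i) ω ∈ Set.Icc (0 : ℝ) (Fintype.card ι) := fun ω => by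
    rw [Finset.sum_apply]
    constructor
    · exact Finset.sum_nonneg fun i _ => (hY01 i ω).1
    · simpa using Finset.sum_le_sum fun i (_ : i ∈ Finset.univ) => (hY01 i ω).2
  have hint : ∀ t, Integrable (fun ω => exp (t * (∑ i, Y i) ω)) μ := fun t =>
    integrable_exp_mul_of_mem_Icc (by fun_prop)
      (ae_of_all _ hX0n)
  have hmgf : ∀ t, mgf (∑ i, Y i) μ t ≤ exp ((exp t - 1) * (Fintype.card ι * p)) := fun t => by
    simpa [hmean] using hindepY.mgf_sum_le_exp hY hY01 t
  have hm : 0 ≤ (Fintype.card ι : ℝ) * p := by positivity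
  have hbound := measureReal_abs_sub_gt_le_of_mgf_le hm hε0 hε1 hint hmgf
  simp only [hX] at hbound
  rw [← ofReal_measureReal]
  exact ENNReal.ofReal_le_ofReal hbound

end Sampling

lemma abs_ciSup_sub_ciSup_le {S : Type*} [Finite S] [Nonempty S] {a b : S → ℝ} {ε : ℝ}
    (hε : 0 ≤ ε) (h : ∀ s, |a s - b s| ≤ ε * b s) :
    |(⨆ s, a s) - ⨆ s, b s| ≤ ε * ⨆ s, b s := by
  obtain ⟨s₀, hs₀⟩ := Finite.exists_max b
  have hb : (⨆ s, b s) = b s₀ :=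
    le_antisymm (ciSup_le hs₀) (le_ciSup (Set.finite_range b).bddAbove s₀)
  have hupper : (⨆ s, a s) ≤ b s₀ + ε * b s₀ := ciSup_le fun s => by
    nlinarith [(abs_le.1 (h s)).2, hs₀ s]
  have hlower : b s₀ - ε * b s₀ ≤ ⨆ s, a s :=
    (by linarith [(abs_le.1 (h s₀)).1] : b s₀ - ε * b s₀ ≤ a s₀).trans
      (le_ciSup (Set.finite_range a).bddAbove s₀)
  rw [hb, abs_le]
  constructor <;> linarith

lemma abs_sum_ciSup_sub_sum_ciSup_le {S V : Type*} [Finite S] [Nonempty S] [Fintype V]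
    {a b : S → V → ℝ} {ε : ℝ} (hε : 0 ≤ ε) (h : ∀ s v, |a s v - b s v| ≤ ε * b s v) :
    |∑ v, (⨆ s, a s v) - ∑ v, ⨆ s, b s v| ≤ ε * ∑ v, ⨆ s, b s v := by
  rw [← Finset.sum_sub_distrib, Finset.mul_sum]
  exact (Finset.abs_sum_le_sum_abs _ _).trans
    (Finset.sum_le_sum fun v _ => abs_ciSup_sub_ciSup_le hε fun s => h s v)

section PositiveValues

variable {S V : Type*} [Finite S] [Finite V] {σ : S → V → ℝ}

lemma finite_setOf_pos_values : {x : ℝ | ∃ s v, 0 < σ s v ∧ σ s v = x}.Finite :=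
  (Set.finite_range fun sv : S × V => σ sv.1 sv.2).subset
    fun _ ⟨s, v, _, hx⟩ => ⟨(s, v), hx⟩

lemma csInf_setOf_pos_values_le {s : S} {v : V} (h : 0 < σ s v) :
    sInf {x : ℝ | ∃ s v, 0 < σ s v ∧ σ s v = x} ≤ σ s v :=
  csInf_le finite_setOf_pos_values.bddBelow ⟨s, v, h, rfl⟩

lemma csInf_setOf_pos_values_pos {s : S} {v : V} (h : 0 < σ s v) :
    0 < sInf {x : ℝ | ∃ s v, 0 < σ s v ∧ σ s v = x} := by
  obtain ⟨s', v', hpos, heq⟩ :=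
    (Set.Nonempty.csInf_mem ⟨σ s v, s, v, h, rfl⟩ finite_setOf_pos_values :
      sInf {x : ℝ | ∃ s v, 0 < σ s v ∧ σ s v = x} ∈ _)
  exact heq ▸ hpos

end PositiveValues

lemma two_mul_exp_neg_le_div {N δ c a x w : ℝ} (hN : 0 < N) (hδ : 0 < δ) (hc : 0 ≤ c)
    (hca : 0 < c * a) (hax : a ≤ x) (hw0 : 0 ≤ w) (hw : 3 * log (2 * N / δ) / (c * a) < w) :
    2 * exp (-(c * (w * x) / 3)) ≤ δ / N := by
  have hlog : log (2 * N / δ) < c * (w * x) / 3 := by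
    rw [div_lt_iff₀ hca] at hw
    nlinarith [mul_le_mul_of_nonneg_left hax (mul_nonneg hc hw0)]
  rw [log_lt_iff_lt_exp (by positivity), div_lt_iff₀ hδ] at hlog
  rw [exp_neg, ← div_eq_mul_inv, div_le_div_iff₀ (exp_pos _) hN]
  linarith

lemma exists_pos_of_sum_eq_one {V : Type*} [Fintype V] {f : V → ℝ} (h : ∑ v, f v = 1) :
    ∃ v, 0 < f v := by
  obtain ⟨v, -, hv⟩ := Finset.exists_lt_of_sum_lt (by simp [h] : ∑ _v : V, (0 : ℝ) < ∑ v, f v)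
  exact ⟨v, hv⟩

lemma one_le_sum_sum_ite_pos {S V : Type*} [Fintype S] [Fintype V] {σ : S → V → ℝ} {s : S}
    {v : V} (h : 0 < σ s v) : 1 ≤ ∑ s, ∑ v, if 0 < σ s v then (1 : ℝ) else 0 := by
  have hv : (1 : ℝ) ≤ ∑ v, if 0 < σ s v then 1 else 0 := by
    simpa [h] using Finset.single_le_sum (f := fun v => if 0 < σ s v then (1 : ℝ) else 0)
      (fun v _ => by positivity) (Finset.mem_univ v)
  exact hv.trans (Finset.single_le_sum (f := fun s => ∑ v, if 0 < σ s v then (1 : ℝ) else 0)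
    (fun s _ => by positivity) (Finset.mem_univ s))

section UnionBound

variable {Ω : Type*} [MeasurableSpace Ω] {μ : Measure Ω}

lemma measure_iUnion_le_ofReal_sum {ι : Type*} [Fintype ι] {s : ι → Set Ω} {f : ι → ℝ}
    (hf : ∀ i, 0 ≤ f i) (h : ∀ i, μ (s i) ≤ ENNReal.ofReal (f i)) :
    μ (⋃ i, s i) ≤ ENNReal.ofReal (∑ i, f i) := by
  rw [ENNReal.ofReal_sum_of_nonneg fun i _ => hf i]
  exact (measure_iUnion_fintype_le μ s).trans (Finset.sum_le_sum fun i _ => h i)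

lemma one_sub_le_measure_of_compl_subset [IsProbabilityMeasure μ] {s t : Set Ω} {δ : ENNReal}
    (hst : sᶜ ⊆ t) (hs : μ s ≤ δ) : 1 - δ ≤ μ t := by
  refine (tsub_le_tsub_left hs 1).trans ((tsub_le_iff_right.2 ?_).trans (measure_mono hst))
  rw [← measure_univ (μ := μ), ← Set.compl_union_self s]
  exact measure_union_le _ _

end UnionBound

theorem stmt7_general {S V : Type*} [Fintype S] [Nonempty S] [Fintype V]
    [DecidableEq V] [MeasurableSpace V] [MeasurableSingletonClass V]
    {Ω : Type*} [MeasureSpace Ω] [IsProbabilityMeasure (ℙ : Measure Ω)]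
    (σ : S → V → ℝ) (hσ0 : ∀ s v, 0 ≤ σ s v) (hσ1 : ∀ s, ∑ v, σ s v = 1)
    (pfail ε : ℝ) (hpf : pfail ∈ Set.Ioo (0:ℝ) 1) (hε : ε ∈ Set.Ioo (0:ℝ) 1)
    (w : ℕ)
    (hwbig : (w : ℝ) >
      3 * Real.log (2 * (∑ s : S, ∑ v : V, if 0 < σ s v then (1:ℝ) else 0) / pfail)
        / (ε ^ 2 * sInf {x : ℝ | ∃ s v, 0 < σ s v ∧ σ s v = x}))
    -- for each s, w i.i.d. samples from σ_s (families for different s need not be independent)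
    (ν : S → Fin w → Ω → V) (hmeas : ∀ s i, Measurable (ν s i))
    (hindep : ∀ s, iIndepFun (ν s) ℙ)
    (hlaw : ∀ s i v, ℙ {ω | ν s i ω = v} = ENNReal.ofReal (σ s v)) :
    ℙ {ω |
        |(∑ v, ⨆ s, (∑ i, if ν s i ω = v then (1:ℝ) else 0)) -
            (w : ℝ) * ∑ v, ⨆ s, σ s v|
          ≤ ε * ((w : ℝ) * ∑ v, ⨆ s, σ s v)}
      ≥ 1 - ENNReal.ofReal pfail := by
  obtain ⟨hpf0, -⟩ := hpf
  obtain ⟨hε0, hε1⟩ := hε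
  set N := ∑ s : S, ∑ v : V, if 0 < σ s v then (1:ℝ) else 0
  obtain ⟨s₀⟩ := ‹Nonempty S›
  obtain ⟨v₀, hv₀⟩ := exists_pos_of_sum_eq_one (hσ1 s₀)
  have hN : 0 < N := one_pos.trans_le (one_le_sum_sum_ite_pos hv₀)
  set B : S × V → Set Ω := fun sv =>
    {ω | ε * (w * σ sv.1 sv.2) < |empiricalCount (ν sv.1) sv.2 ω - w * σ sv.1 sv.2|}
  have hB : ∀ sv : S × V,
      ℙ (B sv) ≤ ENNReal.ofReal (pfail / N * if 0 < σ sv.1 sv.2 then 1 else 0) := by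
    rintro ⟨s, v⟩
    by_cases hpos : 0 < σ s v
    · have hchernoff := measure_abs_empiricalCount_sub_gt_le (hmeas s) (hindep s) (hσ0 s v)
        (hlaw s · v) hε0.le hε1
      rw [Fintype.card_fin] at hchernoff
      refine hchernoff.trans (ENNReal.ofReal_le_ofReal ?_)
      simpa [hpos] using two_mul_exp_neg_le_div hN hpf0 (sq_nonneg ε)
        (mul_pos (pow_pos hε0 2) (csInf_setOf_pos_values_pos hpos))
        (csInf_setOf_pos_values_le hpos) w.cast_nonneg hwbig
    · have hzero : σ s v = 0 := le_antisymm (not_lt.1 hpos) (hσ0 s v)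
      simpa [B, hzero] using (measure_empiricalCount_ne_zero (ν := ν s) (v := v) fun i => by
          rw [hlaw, hzero, ENNReal.ofReal_zero]).le
  have hunion : ℙ (⋃ sv, B sv) ≤ ENNReal.ofReal pfail := by
    refine (measure_iUnion_le_ofReal_sum (fun sv => by positivity) hB).trans_eq ?_
    rw [← Finset.mul_sum, Fintype.sum_prod_type]
    exact congrArg ENNReal.ofReal (div_mul_cancel₀ _ hN.ne')
  refine one_sub_le_measure_of_compl_subset (fun ω hω => ?_) hunion
  simp only [B, Set.compl_iUnion, Set.mem_iInter, Set.mem_compl_iff, Prod.forall] at hω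
  have hsum := abs_sum_ciSup_sub_sum_ciSup_le hε0.le fun s v => not_lt.1 (hω s v)
  simp only [← Real.mul_iSup_of_nonneg w.cast_nonneg, ← Finset.mul_sum] at hsum
  exact hsum

theorem stmt7 {S V : Type*} [Fintype S] [Nonempty S] [Fintype V] [Nonempty V]
    [DecidableEq V] [MeasurableSpace V] [MeasurableSingletonClass V]
    {Ω : Type*} [MeasureSpace Ω] [IsProbabilityMeasure (ℙ : Measure Ω)]
    (σ : S → V → ℝ) (hσ0 : ∀ s v, 0 ≤ σ s v) (hσ1 : ∀ s, ∑ v, σ s v = 1)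
    (pfail ε : ℝ) (hpf : pfail ∈ Set.Ioo (0:ℝ) 1) (hε : ε ∈ Set.Ioo (0:ℝ) 1)
    (w : ℕ) (hw : 0 < w)
    (hwbig : (w : ℝ) >
      3 * Real.log (2 * (∑ s : S, ∑ v : V, if 0 < σ s v then (1:ℝ) else 0) / pfail)
        / (ε ^ 2 * sInf {x : ℝ | ∃ s v, 0 < σ s v ∧ σ s v = x}))
    -- for each s, w i.i.d. samples from σ_s (families for different s need not be independent)
    (ν : S → Fin w → Ω → V) (hmeas : ∀ s i, Measurable (ν s i))
    (hindep : ∀ s, iIndepFun (ν s) ℙ)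
    (hlaw : ∀ s i v, ℙ {ω | ν s i ω = v} = ENNReal.ofReal (σ s v)) :
    ℙ {ω |
        |(∑ v, ⨆ s, (∑ i, if ν s i ω = v then (1:ℝ) else 0)) -
            (w : ℝ) * ∑ v, ⨆ s, σ s v|
          ≤ ε * ((w : ℝ) * ∑ v, ⨆ s, σ s v)}
      ≥ 1 - ENNReal.ofReal pfail :=
  stmt7_general σ hσ0 hσ1 pfail ε hpf hε w hwbig ν hmeas hindep hlaw
end

section
/- (Merge update preserves the backward invariant) Fix t₁, t₂ ∈ V. Suppose p^{t₁}, r^{t₁} ∈ ℝ^V satisfy the backward invariant for t₁ and p^{t₂}, r^{t₂} ∈ ℝ^V satisfy the backward invariant for t₂. Define p' := p^{t₂} + r^{t₂}(t₁) p^{t₁} and r' := r^{t₂} + r^{t₂}(t₁)(r^{t₁} − e_{t₁}). Then p', r' satisfy the backward invariant for t₂, i.e., π_s(t₂) = p'(s) + Σ_{u∈V} π_s(u) r'(u) for all s ∈ V. -/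
open scoped BigOperators
open Matrix

theorem stmt8 {V : Type*} [Fintype V] [DecidableEq V] [Nonempty V]
    (P : Matrix V V ℝ) (hP0 : ∀ u v, 0 ≤ P u v) (hP1 : ∀ u, ∑ v, P u v = 1)
    (α : ℝ) (hα0 : 0 < α) (hα1 : α < 1)
    (t₁ t₂ : V) (pt₁ rt₁ pt₂ rt₂ : V → ℝ)
    -- backward invariant for t₁
    (hbwd₁ : ∀ v, pprPoint P α v t₁ = pt₁ v + ∑ w, pprPoint P α v w * rt₁ w)
    -- backward invariant for t₂
    (hbwd₂ : ∀ v, pprPoint P α v t₂ = pt₂ v + ∑ w, pprPoint P α v w * rt₂ w) :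
    -- the Merge update p' = p^{t₂} + r^{t₂}(t₁) p^{t₁}, r' = r^{t₂} + r^{t₂}(t₁)(r^{t₁} − e_{t₁})
    -- satisfies the backward invariant for t₂
    ∀ s, pprPoint P α s t₂ =
      (pt₂ s + rt₂ t₁ * pt₁ s) +
        ∑ u, pprPoint P α s u * (rt₂ u + rt₂ t₁ * (rt₁ u - (Pi.single t₁ 1 : V → ℝ) u)) := by
  intro s
  have h1 := hbwd₁ s
  have h2 := hbwd₂ s
  have hsingle : ∑ u, pprPoint P α s u * (Pi.single t₁ 1 : V → ℝ) u
      = pprPoint P α s t₁ := by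
    simp [Pi.single_apply, mul_ite, Finset.sum_ite_eq']
  have expand : ∑ u, pprPoint P α s u * (rt₂ u + rt₂ t₁ * (rt₁ u - (Pi.single t₁ 1 : V → ℝ) u))
      = (∑ u, pprPoint P α s u * rt₂ u)
        + rt₂ t₁ * ((∑ u, pprPoint P α s u * rt₁ u) - pprPoint P α s t₁) := by
    rw [← hsingle]
    simp only [Finset.mul_sum, ← Finset.sum_sub_distrib, ← Finset.sum_add_distrib]
    exact Finset.sum_congr rfl fun u _ => by ring
  rw [expand, h2, h1]
  ring
end

section
/- (Matrix invariant, eq. (17)) Let S = {s_1, …, s_l} and T = {t_1, …, t_l} be subsets of V. Suppose for each j the vectors p^{s_j}, r^{s_j} ∈ ℝ_+^V satisfy the forward invariant for s_j and the vectors p^{t_j}, r^{t_j} ∈ ℝ_+^V satisfy the backward invariant for t_j. Let P_S, R_S, P_T, R_T ∈ ℝ^{V×l} be the matrices whose j-th columns are p^{s_j}, r^{s_j}, p^{t_j}, r^{t_j} respectively, let Π ∈ ℝ^{V×V} have entries Π(u,v) = π_u(v), let Π(S,T) be the l×l matrix with (i,j) entry π_{s_i}(t_j), and let P_T(S,:)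 be the l×l matrix with (i,j) entry p^{t_j}(s_i). Then Π(S,T) = P_T(S,:) + P_S^T R_T + R_S^T Π R_T. -/
open scoped BigOperators
open Matrix

theorem stmt10 {V : Type*} [Fintype V] [DecidableEq V] [Nonempty V]
    (P : Matrix V V ℝ) (hP0 : ∀ u v, 0 ≤ P u v) (hP1 : ∀ u, ∑ v, P u v = 1)
    (α : ℝ) (hα0 : 0 < α) (hα1 : α < 1)
    (l : ℕ) (s t : Fin l → V)
    (ps rs pt rt : Fin l → V → ℝ)
    (hps0 : ∀ j v, 0 ≤ ps j v) (hrs0 : ∀ j v, 0 ≤ rs j v)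
    (hpt0 : ∀ j v, 0 ≤ pt j v) (hrt0 : ∀ j v, 0 ≤ rt j v)
    -- forward invariant for each s_j
    (hfwd : ∀ j u, pprPoint P α (s j) u = ps j u + ∑ x, rs j x * pprPoint P α x u)
    -- backward invariant for each t_j
    (hbwd : ∀ j v, pprPoint P α v (t j) = pt j v + ∑ x, pprPoint P α v x * rt j x)
    -- the matrices P_S, R_S, P_T, R_T (columns p^{s_j}, r^{s_j}, p^{t_j}, r^{t_j}), Π, Π(S,T), P_T(S,:)
    (PS RS PT RT : Matrix V (Fin l) ℝ)
    (hPS : PS = Matrix.of fun u j => ps j u) (hRS : RS = Matrix.of fun u j => rs j u)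
    (hPT : PT = Matrix.of fun u j => pt j u) (hRT : RT = Matrix.of fun u j => rt j u)
    (Pi : Matrix V V ℝ) (hPi : Pi = Matrix.of fun u v => pprPoint P α u v)
    (PiST : Matrix (Fin l) (Fin l) ℝ)
    (hPiST : PiST = Matrix.of fun i j => pprPoint P α (s i) (t j))
    (PTS : Matrix (Fin l) (Fin l) ℝ)
    (hPTS : PTS = Matrix.of fun i j => pt j (s i)) :
    PiST = PTS + PSᵀ * RT + RSᵀ * Pi * RT := by
  subst hPS hRS hPT hRT hPi hPiST hPTS
  ext i j
  simp only [Matrix.add_apply, Matrix.mul_apply, Matrix.transpose_apply, Matrix.of_apply]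
  have key : ∑ x, pprPoint P α (s i) x * rt j x
      = (∑ x, ps i x * rt j x) + ∑ k, (∑ x, rs i x * pprPoint P α x k) * rt j k := by
    calc ∑ x, pprPoint P α (s i) x * rt j x
        = ∑ x, ((ps i x + ∑ w, rs i w * pprPoint P α w x) * rt j x) :=
          Finset.sum_congr rfl fun x _ => by rw [hfwd i x]
      _ = (∑ x, ps i x * rt j x) + ∑ x, (∑ w, rs i w * pprPoint P α w x) * rt j x := by
          rw [← Finset.sum_add_distrib]
          exact Finset.sum_congr rfl fun x _ => by ring
      _ = (∑ x, ps i x * rt j x) + ∑ k, (∑ x, rs i x * pprPoint P α x k) * rt j k := by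
          rfl
  rw [hbwd j (s i), key]
  ring
end

section
/- (Lemma F.2, σ_avg case: second-moment bound) Under the setting of the matrix invariant (forward invariants for s_1,…,s_l with 0 < ‖r^{s_j}‖₁ ≤ r^s_max, backward invariants for t_1,…,t_l with entries of r^{t_j} in [0, r^t_max]), let σ := σ_avg where σ_avg(u) = (1/l) Σ_{j=1}^l r^{s_j}(u)/‖r^{s_j}‖₁, assume σ(u) > 0 for all u ∈ V, and for u, v ∈ V set X(u,v) := R_S^T diag(1/σ) e_u e_v^T R_T ∈ ℝ^{l×l}. Define M₁ := Σ_{u,v∈V} σ(u) π_u(v) X(u,v) X(u,v)^T and M₂ := Σ_{u,v∈V} σ(u) π_u(v) X(u,v)^T X(u,v). Then max{‖M₁‖₂, ‖M₂‖₂} ≤ l² r^s_max r^t_max ‖Π(S,T)‖_F. -/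
open scoped BigOperators
open Matrix

/-- Spectral (operator) norm of an `l × l` real matrix:
`‖A‖₂ = sup { ‖A x‖₂ : ‖x‖₂ = 1 }`. -/
noncomputable def specNorm {l : ℕ} (A : Matrix (Fin l) (Fin l) ℝ) : ℝ :=
  sSup {c : ℝ | ∃ x : Fin l → ℝ, (∑ j, x j ^ 2) = 1 ∧
    c = Real.sqrt (∑ i, (∑ j, A i j * x j) ^ 2)}

/-- Frobenius norm of an `l × l` real matrix. -/
noncomputable def frobNorm {l : ℕ} (A : Matrix (Fin l) (Fin l) ℝ) : ℝ :=
  Real.sqrt (∑ i, ∑ j, A i j ^ 2)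

/-! Each `X(u,v)` has entries `r^{s_i}(u) r^{t_j}(v) / σ(u)`, and `σ = σ_avg` gives
`r^{s_i}(u) ≤ l r^s_max σ(u)`. Bounding one factor `r^{s_i}(u) / σ(u)` by `l r^s_max` and one
factor `r^{t_j}(v)` by `r^t_max` leaves in every entry of `M₁` (resp. `M₂`) a sum of terms
`Σ_u r^{s_k}(u) Σ_v π_u(v) r^{t_j}(v)`, which the backward and then the forward invariant bound
by `π_{s_k}(t_j)`. Hence the entries of `M₁`, `M₂` are nonnegative and dominated by
`l r^s_max r^t_max` times a row sum of `Π(S,T)` (resp. a column sum), and Cauchy–Schwarz gives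
`‖M‖₂ ≤ ‖M‖_F ≤ l² r^s_max r^t_max ‖Π(S,T)‖_F`. -/

lemma pprPoint_apply {V : Type*} [Fintype V] [DecidableEq V] (P : Matrix V V ℝ) (α : ℝ)
    (x u : V) :
    pprPoint P α x u = α * pprSeries P α x u := by
  simp [pprPoint, ppr, vecMul, dotProduct, Pi.single_apply]

lemma pprPoint_nonneg {V : Type*} [Fintype V] [DecidableEq V] {P : Matrix V V ℝ}
    (hP : ∀ u v, 0 ≤ P u v) {α : ℝ} (hα0 : 0 ≤ α) (hα1 : α ≤ 1) (x u : V) :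
    0 ≤ pprPoint P α x u := by
  -- `tsum_nonneg` needs no summability: a divergent series sums to `0`.
  have hterm : ∀ i : ℕ, (0 : V → V → ℝ) ≤ (1 - α) ^ i • P ^ i := fun i a b =>
    mul_nonneg (pow_nonneg (sub_nonneg.2 hα1) i) (pow_apply_nonneg hP i a b)
  rw [pprPoint_apply]
  exact mul_nonneg hα0 (tsum_nonneg hterm x u)

lemma sum_mul_sum_le_of_invariants {V : Type*} [Fintype V] {π : V → V → ℝ} {s t : V}
    {ps rs pt rt : V → ℝ} (hfwd : π s t = ps t + ∑ x, rs x * π x t) (hps : 0 ≤ ps t)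
    (hbwd : ∀ u, π u t = pt u + ∑ x, π u x * rt x) (hpt : ∀ u, 0 ≤ pt u)
    (hrs : ∀ u, 0 ≤ rs u) :
    ∑ u, rs u * ∑ v, π u v * rt v ≤ π s t :=
  calc ∑ u, rs u * ∑ v, π u v * rt v ≤ ∑ u, rs u * π u t := by
        gcongr with u _
        · exact hrs u
        · linarith [hbwd u, hpt u]
    _ ≤ π s t := by linarith

lemma le_mul_sigmaAvg {V : Type*} [Fintype V] {l : ℕ} {rs : Fin l → V → ℝ} {rsmax : ℝ}
    (hrs0 : ∀ j v, 0 ≤ rs j v) (hrspos : ∀ j, 0 < ∑ x, |rs j x|)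
    (hrsub : ∀ j, ∑ x, |rs j x| ≤ rsmax) (i : Fin l) (u : V) :
    rs i u ≤ l * rsmax * ((1 / (l : ℝ)) * ∑ j, rs j u / ∑ x, |rs j x|) := by
  have hl : (l : ℝ) ≠ 0 := Nat.cast_ne_zero.2 (Fin.pos i).ne'
  have hrsmax : 0 ≤ rsmax := (hrspos i).le.trans (hrsub i)
  calc rs i u = (∑ x, |rs i x|) * (rs i u / ∑ x, |rs i x|) := by
        rw [mul_div_cancel₀ _ (hrspos i).ne']
    _ ≤ rsmax * (rs i u / ∑ x, |rs i x|) :=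
        mul_le_mul_of_nonneg_right (hrsub i) (div_nonneg (hrs0 i u) (hrspos i).le)
    _ ≤ rsmax * ∑ j, rs j u / ∑ x, |rs j x| :=
        mul_le_mul_of_nonneg_left (Finset.single_le_sum
          (fun j _ => div_nonneg (hrs0 j u) (hrspos j).le) (Finset.mem_univ i)) hrsmax
    _ = l * rsmax * ((1 / (l : ℝ)) * ∑ j, rs j u / ∑ x, |rs j x|) := by
        field_simp

lemma transpose_mul_diagonal_mul_single_mul_apply {V ι κ R : Type*} [Fintype V] [DecidableEq V]
    [CommSemiring R] (A : Matrix V ι R) (d : V → R) (B : Matrix V κ R) (u v : V) (i : ι) (j : κ) :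
    (Aᵀ * diagonal d * single u v (1 : R) * B) i j = A u i * d u * B v j := by
  simp [mul_apply, single, diagonal_apply, Finset.sum_ite_eq, Finset.sum_ite_eq', ite_and]

lemma sum_smul_mul_transpose_apply {V ι : Type*} [Fintype V] [Fintype ι] (w : V → V → ℝ)
    (X : V → V → Matrix ι ι ℝ) (i k : ι) :
    (∑ u, ∑ v, w u v • (X u v * (X u v)ᵀ)) i k
      = ∑ u, ∑ v, ∑ j, w u v * (X u v i j * X u v k j) := by
  simp [Matrix.sum_apply, mul_apply, Finset.mul_sum]

lemma sum_smul_transpose_mul_apply {V ι : Type*} [Fintype V] [Fintype ι] (w : V → V → ℝ)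
    (X : V → V → Matrix ι ι ℝ) (j k : ι) :
    (∑ u, ∑ v, w u v • ((X u v)ᵀ * X u v)) j k
      = ∑ u, ∑ v, ∑ i, w u v * (X u v i j * X u v i k) := by
  simp [Matrix.sum_apply, mul_apply, Finset.mul_sum]

lemma sum_weighted_prod_le {V ι : Type*} [Fintype V] [Fintype ι] {σ : V → ℝ} {π : V → V → ℝ}
    {a b c e : ι → V → ℝ} {L T : ℝ} (hσ : ∀ u, 0 < σ u) (hπ : ∀ u v, 0 ≤ π u v)
    (ha0 : ∀ m u, 0 ≤ a m u) (ha : ∀ m u, a m u ≤ L * σ u) (hc0 : ∀ m v, 0 ≤ c m v)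
    (hc : ∀ m v, c m v ≤ T) (hb : ∀ m u, 0 ≤ b m u) (he : ∀ m v, 0 ≤ e m v) :
    ∑ u, ∑ v, ∑ m, σ u * π u v * (a m u / σ u * c m v * (b m u / σ u * e m v))
      ≤ L * T * ∑ m, ∑ u, b m u * ∑ v, π u v * e m v := by
  have hterm : ∀ u v m, σ u * π u v * (a m u / σ u * c m v * (b m u / σ u * e m v))
      ≤ L * T * (b m u * (π u v * e m v)) := by
    intro u v m
    have hL : a m u / σ u ≤ L := (div_le_iff₀ (hσ u)).2 (ha m u)
    calc σ u * π u v * (a m u / σ u * c m v * (b m u / σ u * e m v))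
        = a m u / σ u * c m v * (b m u * (π u v * e m v)) := by
          field_simp [(hσ u).ne']
      _ ≤ L * T * (b m u * (π u v * e m v)) := by
          refine mul_le_mul_of_nonneg_right ?_ (mul_nonneg (hb m u) (mul_nonneg (hπ u v) (he m v)))
          exact mul_le_mul hL (hc m v) (hc0 m v) ((div_nonneg (ha0 m u) (hσ u).le).trans hL)
  calc _ ≤ ∑ u, ∑ v, ∑ m, L * T * (b m u * (π u v * e m v)) :=
        Finset.sum_le_sum fun u _ => Finset.sum_le_sum fun v _ =>
          Finset.sum_le_sum fun m _ => hterm u v m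
    _ = L * T * ∑ m, ∑ u, b m u * ∑ v, π u v * e m v := by
        simp_rw [Finset.mul_sum]
        exact (Finset.sum_congr rfl fun u _ => Finset.sum_comm).trans Finset.sum_comm

lemma sum_smul_mul_transpose_apply_nonneg {V ι : Type*} [Fintype V] [Fintype ι]
    {w : V → V → ℝ} {X : V → V → Matrix ι ι ℝ} (hw : ∀ u v, 0 ≤ w u v)
    (hX : ∀ u v i j, 0 ≤ X u v i j) (i k : ι) :
    0 ≤ (∑ u, ∑ v, w u v • (X u v * (X u v)ᵀ)) i k := by
  rw [sum_smul_mul_transpose_apply]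
  exact Finset.sum_nonneg fun u _ => Finset.sum_nonneg fun v _ => Finset.sum_nonneg fun j _ =>
    mul_nonneg (hw u v) (mul_nonneg (hX u v i j) (hX u v k j))

lemma sum_smul_transpose_mul_apply_nonneg {V ι : Type*} [Fintype V] [Fintype ι]
    {w : V → V → ℝ} {X : V → V → Matrix ι ι ℝ} (hw : ∀ u v, 0 ≤ w u v)
    (hX : ∀ u v i j, 0 ≤ X u v i j) (j k : ι) :
    0 ≤ (∑ u, ∑ v, w u v • ((X u v)ᵀ * X u v)) j k := by
  simpa using sum_smul_mul_transpose_apply_nonneg (X := fun u v => (X u v)ᵀ) hw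
    (fun u v i j => hX u v j i) j k

section SecondMoment

variable {V ι : Type*} [Fintype V] [Fintype ι] {σ : V → ℝ} {π : V → V → ℝ}
  {rs rt : ι → V → ℝ} {X : V → V → Matrix ι ι ℝ} {L T : ℝ}

lemma sum_smul_mul_transpose_apply_le (hX : ∀ u v i j, X u v i j = rs i u / σ u * rt j v)
    (hσ : ∀ u, 0 < σ u) (hπ : ∀ u v, 0 ≤ π u v) (hrs0 : ∀ i u, 0 ≤ rs i u)
    (hrs : ∀ i u, rs i u ≤ L * σ u) (hrt0 : ∀ j v, 0 ≤ rt j v) (hrt : ∀ j v, rt j v ≤ T)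
    (i k : ι) :
    (∑ u, ∑ v, (σ u * π u v) • (X u v * (X u v)ᵀ)) i k
      ≤ L * T * ∑ j, ∑ u, rs k u * ∑ v, π u v * rt j v := by
  rw [sum_smul_mul_transpose_apply]
  simp only [hX]
  exact sum_weighted_prod_le (a := fun _ => rs i) (b := fun _ => rs k) hσ hπ (fun _ => hrs0 i)
    (fun _ => hrs i) hrt0 hrt (fun _ => hrs0 k) hrt0

lemma sum_smul_transpose_mul_apply_le (hX : ∀ u v i j, X u v i j = rs i u / σ u * rt j v)
    (hσ : ∀ u, 0 < σ u) (hπ : ∀ u v, 0 ≤ π u v) (hrs0 : ∀ i u, 0 ≤ rs i u)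
    (hrs : ∀ i u, rs i u ≤ L * σ u) (hrt0 : ∀ j v, 0 ≤ rt j v) (hrt : ∀ j v, rt j v ≤ T)
    (j k : ι) :
    (∑ u, ∑ v, (σ u * π u v) • ((X u v)ᵀ * X u v)) j k
      ≤ L * T * ∑ i, ∑ u, rs i u * ∑ v, π u v * rt k v := by
  rw [sum_smul_transpose_mul_apply]
  simp only [hX]
  exact sum_weighted_prod_le (c := fun _ => rt j) (e := fun _ => rt k) hσ hπ hrs0 hrs
    (fun _ => hrt0 j) (fun _ => hrt j) hrs0 (fun _ => hrt0 k)

end SecondMoment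

lemma specNorm_le_frobNorm {l : ℕ} (A : Matrix (Fin l) (Fin l) ℝ) : specNorm A ≤ frobNorm A := by
  refine Real.sSup_le ?_ (Real.sqrt_nonneg _)
  rintro _ ⟨x, hx, rfl⟩
  refine Real.sqrt_le_sqrt ?_
  calc ∑ i, (∑ j, A i j * x j) ^ 2 ≤ ∑ i, (∑ j, A i j ^ 2) * ∑ j, x j ^ 2 :=
        Finset.sum_le_sum fun i _ => Finset.sum_mul_sq_le_sq_mul_sq _ _ _
    _ = ∑ i, ∑ j, A i j ^ 2 := by simp [hx]

lemma frobNorm_transpose {l : ℕ} (A : Matrix (Fin l) (Fin l) ℝ) : frobNorm Aᵀ = frobNorm A := by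
  rw [frobNorm, frobNorm, Finset.sum_comm]
  rfl

lemma frobNorm_le_of_le_mul_sum {l : ℕ} {M Q : Matrix (Fin l) (Fin l) ℝ} {B : ℝ} (hB : 0 ≤ B)
    (hM0 : ∀ i k, 0 ≤ M i k) (hM : ∀ i k, M i k ≤ B * ∑ j, Q k j) :
    frobNorm M ≤ l * B * frobNorm Q := by
  have hQ : frobNorm Q ^ 2 = ∑ k, ∑ j, Q k j ^ 2 :=
    Real.sq_sqrt (Finset.sum_nonneg fun _ _ => Finset.sum_nonneg fun _ _ => sq_nonneg _)
  rw [frobNorm, Real.sqrt_le_left (by unfold frobNorm; positivity)]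
  calc ∑ i, ∑ k, M i k ^ 2 ≤ ∑ _i : Fin l, ∑ k, (B * ∑ j, Q k j) ^ 2 :=
        Finset.sum_le_sum fun i _ => Finset.sum_le_sum fun k _ =>
          pow_le_pow_left₀ (hM0 i k) (hM i k) 2
    _ = l * B ^ 2 * ∑ k, (∑ j, Q k j) ^ 2 := by
        simp_rw [mul_pow, ← Finset.mul_sum, Finset.sum_const, Finset.card_fin, nsmul_eq_mul]
        ring
    _ ≤ l * B ^ 2 * ∑ k, (l * ∑ j, Q k j ^ 2) := by
        gcongr with k
        simpa using sq_sum_le_card_mul_sum_sq (s := Finset.univ) (f := fun j => Q k j)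
    _ = (l * B * frobNorm Q) ^ 2 := by
        rw [mul_pow, mul_pow, hQ, ← Finset.mul_sum]
        ring

theorem stmt15_general {V : Type*} [Fintype V] [DecidableEq V] [Nonempty V]
    (P : Matrix V V ℝ) (hP0 : ∀ u v, 0 ≤ P u v)
    (α : ℝ) (hα0 : 0 < α) (hα1 : α < 1)
    (l : ℕ) (hl : 1 ≤ l) (s t : Fin l → V)
    (rsmax rtmax : ℝ)
    (ps rs pt rt : Fin l → V → ℝ)
    (hps0 : ∀ j v, 0 ≤ ps j v) (hrs0 : ∀ j v, 0 ≤ rs j v)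
    (hpt0 : ∀ j v, 0 ≤ pt j v) (hrt0 : ∀ j v, 0 ≤ rt j v)
    -- forward invariant for each s_j, with 0 < ‖r^{s_j}‖₁ ≤ r^s_max
    (hfwd : ∀ j u, pprPoint P α (s j) u = ps j u + ∑ x, rs j x * pprPoint P α x u)
    (hrspos : ∀ j, 0 < ∑ x, |rs j x|) (hrsub : ∀ j, ∑ x, |rs j x| ≤ rsmax)
    -- backward invariant for each t_j, with entries of r^{t_j} in [0, r^t_max]
    (hbwd : ∀ j v, pprPoint P α v (t j) = pt j v + ∑ x, pprPoint P α v x * rt j x)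
    (hrtub : ∀ j v, rt j v ≤ rtmax)
    -- σ = σ_avg
    (σ : V → ℝ) (hσdef : σ = fun u => (1 / (l : ℝ)) * ∑ j, rs j u / ∑ x, |rs j x|)
    (hσpos : ∀ u, 0 < σ u)
    (RS RT : Matrix V (Fin l) ℝ)
    (hRS : RS = Matrix.of fun u j => rs j u) (hRT : RT = Matrix.of fun u j => rt j u)
    -- X(u,v) = R_Sᵀ diag(1/σ) e_u e_vᵀ R_T
    (X : V → V → Matrix (Fin l) (Fin l) ℝ)
    (hX : X = fun u v => RSᵀ * Matrix.diagonal (fun x => 1 / σ x) *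
      Matrix.single u v (1:ℝ) * RT)
    (PiST : Matrix (Fin l) (Fin l) ℝ)
    (hPiST : PiST = Matrix.of fun i j => pprPoint P α (s i) (t j))
    (M₁ M₂ : Matrix (Fin l) (Fin l) ℝ)
    (hM₁ : M₁ = ∑ u, ∑ v, (σ u * pprPoint P α u v) • (X u v * (X u v)ᵀ))
    (hM₂ : M₂ = ∑ u, ∑ v, (σ u * pprPoint P α u v) • ((X u v)ᵀ * X u v)) :
    max (specNorm M₁) (specNorm M₂) ≤ (l : ℝ) ^ 2 * rsmax * rtmax * frobNorm PiST := by
  set π := pprPoint P α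
  have hπ : ∀ u v, 0 ≤ π u v := pprPoint_nonneg hP0 hα0.le hα1.le
  have hw : ∀ u v, 0 ≤ σ u * π u v := fun u v => mul_nonneg (hσpos u).le (hπ u v)
  have hrsL : ∀ i u, rs i u ≤ l * rsmax * σ u := by
    subst hσdef; exact le_mul_sigmaAvg hrs0 hrspos hrsub
  have hXe : ∀ u v i j, X u v i j = rs i u / σ u * rt j v := by
    simp [hX, hRS, hRT, transpose_mul_diagonal_mul_single_mul_apply, div_eq_mul_inv]
  have hX0 : ∀ u v i j, 0 ≤ X u v i j := fun u v i j =>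
    hXe u v i j ▸ mul_nonneg (div_nonneg (hrs0 i u) (hσpos u).le) (hrt0 j v)
  have hcross : ∀ k j, ∑ u, rs k u * ∑ v, π u v * rt j v ≤ PiST k j := fun k j =>
    hPiST ▸ sum_mul_sum_le_of_invariants (hfwd k (t j)) (hps0 k (t j)) (hbwd j) (hpt0 j) (hrs0 k)
  have hD : 0 ≤ l * rsmax * rtmax := by
    have j : Fin l := ⟨0, hl⟩
    have hrsmax := (hrspos j).le.trans (hrsub j)
    have hrtmax := (hrt0 j (Classical.arbitrary V)).trans (hrtub j _)
    positivity
  have h₁ : frobNorm M₁ ≤ l * (l * rsmax * rtmax) * frobNorm PiST := by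
    refine frobNorm_le_of_le_mul_sum hD (hM₁ ▸ sum_smul_mul_transpose_apply_nonneg hw hX0)
      fun i k => hM₁ ▸ ?_
    refine (sum_smul_mul_transpose_apply_le hXe hσpos hπ hrs0 hrsL hrt0 hrtub i k).trans ?_
    gcongr with j
    exact hcross k j
  have h₂ : frobNorm M₂ ≤ l * (l * rsmax * rtmax) * frobNorm PiSTᵀ := by
    refine frobNorm_le_of_le_mul_sum hD (hM₂ ▸ sum_smul_transpose_mul_apply_nonneg hw hX0)
      fun j k => hM₂ ▸ ?_
    refine (sum_smul_transpose_mul_apply_le hXe hσpos hπ hrs0 hrsL hrt0 hrtub j k).trans ?_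
    gcongr with i
    exact hcross i k
  rw [frobNorm_transpose] at h₂
  calc max (specNorm M₁) (specNorm M₂) ≤ max (frobNorm M₁) (frobNorm M₂) :=
        max_le_max (specNorm_le_frobNorm M₁) (specNorm_le_frobNorm M₂)
    _ ≤ l * (l * rsmax * rtmax) * frobNorm PiST := max_le h₁ h₂
    _ = l ^ 2 * rsmax * rtmax * frobNorm PiST := by ring

theorem stmt15 {V : Type*} [Fintype V] [DecidableEq V] [Nonempty V]
    (P : Matrix V V ℝ) (hP0 : ∀ u v, 0 ≤ P u v) (hP1 : ∀ u, ∑ v, P u v = 1)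
    (α : ℝ) (hα0 : 0 < α) (hα1 : α < 1)
    (l : ℕ) (hl : 1 ≤ l) (s t : Fin l → V)
    (rsmax rtmax : ℝ)
    (ps rs pt rt : Fin l → V → ℝ)
    (hps0 : ∀ j v, 0 ≤ ps j v) (hrs0 : ∀ j v, 0 ≤ rs j v)
    (hpt0 : ∀ j v, 0 ≤ pt j v) (hrt0 : ∀ j v, 0 ≤ rt j v)
    -- forward invariant for each s_j, with 0 < ‖r^{s_j}‖₁ ≤ r^s_max
    (hfwd : ∀ j u, pprPoint P α (s j) u = ps j u + ∑ x, rs j x * pprPoint P α x u)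
    (hrspos : ∀ j, 0 < ∑ x, |rs j x|) (hrsub : ∀ j, ∑ x, |rs j x| ≤ rsmax)
    -- backward invariant for each t_j, with entries of r^{t_j} in [0, r^t_max]
    (hbwd : ∀ j v, pprPoint P α v (t j) = pt j v + ∑ x, pprPoint P α v x * rt j x)
    (hrtub : ∀ j v, rt j v ≤ rtmax)
    -- σ = σ_avg
    (σ : V → ℝ) (hσdef : σ = fun u => (1 / (l : ℝ)) * ∑ j, rs j u / ∑ x, |rs j x|)
    (hσpos : ∀ u, 0 < σ u)
    (RS RT : Matrix V (Fin l) ℝ)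
    (hRS : RS = Matrix.of fun u j => rs j u) (hRT : RT = Matrix.of fun u j => rt j u)
    -- X(u,v) = R_Sᵀ diag(1/σ) e_u e_vᵀ R_T
    (X : V → V → Matrix (Fin l) (Fin l) ℝ)
    (hX : X = fun u v => RSᵀ * Matrix.diagonal (fun x => 1 / σ x) *
      Matrix.single u v (1:ℝ) * RT)
    (PiST : Matrix (Fin l) (Fin l) ℝ)
    (hPiST : PiST = Matrix.of fun i j => pprPoint P α (s i) (t j))
    (M₁ M₂ : Matrix (Fin l) (Fin l) ℝ)
    (hM₁ : M₁ = ∑ u, ∑ v, (σ u * pprPoint P α u v) • (X u v * (X u v)ᵀ))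
    (hM₂ : M₂ = ∑ u, ∑ v, (σ u * pprPoint P α u v) • ((X u v)ᵀ * X u v)) :
    max (specNorm M₁) (specNorm M₂) ≤ (l : ℝ) ^ 2 * rsmax * rtmax * frobNorm PiST :=
  stmt15_general P hP0 α hα0 hα1 l hl s t rsmax rtmax ps rs pt rt hps0 hrs0 hpt0 hrt0 hfwd hrspos
    hrsub hbwd hrtub σ hσdef hσpos RS RT hRS hRT X hX PiST hPiST M₁ M₂ hM₁ hM₂
end
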